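/- If F is a set of vertices of Q_n with |F| ≤ 2n − 7 and every vertex outside F has at least two neighbors outside F, then there exists a coordinate j such that in each of the two subcubes L_j and R_j (induced by fixing the j-th bit to 0 and 1 respectively), every vertex outside F has at least two neighbors outside F within that subcube. -/

import Mathlib

/-!
A vertex with at most two fault-free neighbours has at least `n - 2` faulty ones, and two distinct
vertices of `Q_n` have at most two common neighbours, so two such vertices would need at least
`2n - 6` faults. Hence at most one fault-free vertex `v₀` has only two fault-free neighbours, and
every other one has at least three. Restricting to the subcube through a vertex along `j` loses
only its neighbour across `j`, so any `j` other than the two fault-free directions at `v₀` works.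
-/

def cube (n : ℕ) : SimpleGraph (Fin n → Bool) where
  Adj u v := (Finset.univ.filter fun i => u i ≠ v i).card = 1
  symm := ⟨by intro u v h; simpa [ne_comm] using h⟩
  loopless := ⟨by intro u h; simp at h⟩

instance (n : ℕ) : DecidableRel (cube n).Adj := fun u v =>
  inferInstanceAs (Decidable (_ = 1))

def onesCount {n : ℕ} (u : Fin n → Bool) : ℕ :=
  (Finset.univ.filter fun i => u i = true).card

open Finset

namespace cube

variable {n : ℕ}

def flipCoord (v : Fin n → Bool) (i : Fin n) : Fin n → Bool :=
  Function.update v i (!v i)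

@[simp]
lemma flipCoord_apply_self (v : Fin n → Bool) (i : Fin n) : flipCoord v i i = !v i :=
  Function.update_self ..

lemma flipCoord_apply_of_ne (v : Fin n → Bool) {i j : Fin n} (h : j ≠ i) :
    flipCoord v i j = v j :=
  Function.update_of_ne h ..

@[simp]
lemma flipCoord_apply_eq_iff (v : Fin n → Bool) (i j : Fin n) :
    flipCoord v i j = v j ↔ j ≠ i := by
  by_cases h : j = i
  · subst h; simp
  · simp [flipCoord_apply_of_ne v h, h]

@[simp]
lemma flipCoord_flipCoord (v : Fin n → Bool) (i : Fin n) :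
    flipCoord (flipCoord v i) i = v := by
  simp [flipCoord]

lemma flipCoord_injective (v : Fin n → Bool) : Function.Injective (flipCoord v) := by
  intro i j h
  by_contra hij
  simpa [flipCoord_apply_of_ne v (Ne.symm hij)] using congrFun h j

lemma hammingDist_flipCoord (v : Fin n → Bool) (i : Fin n) :
    hammingDist v (flipCoord v i) = 1 := by
  rw [hammingDist, card_eq_one]
  refine ⟨i, ext fun j => ?_⟩
  rw [mem_filter, mem_singleton, ne_comm, Ne, flipCoord_apply_eq_iff, not_not]
  simp

lemma adj_iff_exists_flipCoord {v w : Fin n → Bool} :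
    (cube n).Adj v w ↔ ∃ i, flipCoord v i = w := by
  refine ⟨fun h => ?_, fun ⟨i, hi⟩ => hi ▸ hammingDist_flipCoord v i⟩
  obtain ⟨i, hi⟩ := card_eq_one.mp h
  have hdiff (j : Fin n) : v j ≠ w j ↔ j = i := by simpa using congrArg (j ∈ ·) hi
  refine ⟨i, funext fun j => ?_⟩
  by_cases hj : j = i
  · subst hj
    rw [flipCoord_apply_self]
    exact (Bool.eq_not.mpr ((hdiff j).2 rfl).symm).symm
  · rw [flipCoord_apply_of_ne v hj]; simpa [hj] using hdiff j

lemma filter_adj_and_eq_image (v : Fin n → Bool) (p : (Fin n → Bool) → Prop)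
    [DecidablePred p] :
    ({w | (cube n).Adj v w ∧ p w} : Finset _) =
      ({i | p (flipCoord v i)} : Finset _).image (flipCoord v) := by
  ext w
  simp only [mem_filter, mem_univ, true_and, mem_image, adj_iff_exists_flipCoord]
  constructor
  · rintro ⟨⟨i, rfl⟩, hp⟩; exact ⟨i, hp, rfl⟩
  · rintro ⟨i, hp, rfl⟩; exact ⟨⟨i, rfl⟩, hp⟩

lemma card_filter_adj_and (v : Fin n → Bool) (p : (Fin n → Bool) → Prop) [DecidablePred p] :
    #{w | (cube n).Adj v w ∧ p w} = #{i | p (flipCoord v i)} := by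
  rw [filter_adj_and_eq_image, card_image_of_injective _ (flipCoord_injective v)]

lemma neighborFinset_eq_image (v : Fin n → Bool) :
    (cube n).neighborFinset v = univ.image (flipCoord v) := by
  ext w
  simp [adj_iff_exists_flipCoord]

lemma coord_ne_of_flipCoord_eq {u v : Fin n → Bool} (huv : u ≠ v) {i k : Fin n}
    (h : flipCoord u i = flipCoord v k) : u i ≠ v i := by
  intro hi
  by_cases hk : i = k
  · subst hk
    exact huv (by simpa only [flipCoord_flipCoord] using congrArg (flipCoord · i) h)
  · simpa [flipCoord_apply_of_ne v hk, hi] using congrFun h i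

lemma card_neighborFinset_inter_le_two {u v : Fin n → Bool} (huv : u ≠ v) :
    #((cube n).neighborFinset u ∩ (cube n).neighborFinset v) ≤ 2 := by
  obtain h | ⟨w₀, hw₀⟩ :=
    ((cube n).neighborFinset u ∩ (cube n).neighborFinset v).eq_empty_or_nonempty
  · simp [h]
  rw [mem_inter, SimpleGraph.mem_neighborFinset, SimpleGraph.mem_neighborFinset] at hw₀
  have huw : hammingDist u w₀ = 1 := hw₀.1
  have hvw : hammingDist v w₀ = 1 := hw₀.2
  have hsub : (cube n).neighborFinset u ∩ (cube n).neighborFinset v ⊆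
      ({i | u i ≠ v i} : Finset _).image (flipCoord u) := by
    intro w hw
    simp only [neighborFinset_eq_image, mem_inter, mem_image, mem_univ, true_and] at hw
    obtain ⟨⟨i, rfl⟩, k, hk⟩ := hw
    exact mem_image.mpr ⟨i, by simpa using coord_ne_of_flipCoord_eq huv hk.symm, rfl⟩
  calc #((cube n).neighborFinset u ∩ (cube n).neighborFinset v)
      ≤ hammingDist u v := (card_le_card hsub).trans card_image_le
    _ ≤ hammingDist u w₀ + hammingDist w₀ v := hammingDist_triangle u w₀ v
    _ = 2 := by rw [hammingDist_comm w₀ v, huw, hvw]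

lemma card_neighborFinset (v : Fin n → Bool) : #((cube n).neighborFinset v) = n := by
  rw [neighborFinset_eq_image, card_image_of_injective _ (flipCoord_injective v), card_univ,
    Fintype.card_fin]

lemma card_neighborFinset_inter_add_card_filter (F : Finset (Fin n → Bool)) (v : Fin n → Bool) :
    #((cube n).neighborFinset v ∩ F) + #{w | (cube n).Adj v w ∧ w ∉ F} = n := by
  have hfree : ({w | (cube n).Adj v w ∧ w ∉ F} : Finset _) = (cube n).neighborFinset v \ F := by
    ext w; simp
  rw [hfree, card_inter_add_card_sdiff, card_neighborFinset]

lemma two_mul_le_card_add_six_of_ne {F : Finset (Fin n → Bool)} {u v : Fin n → Bool}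
    (huv : u ≠ v) (hu : #{w | (cube n).Adj u w ∧ w ∉ F} ≤ 2)
    (hv : #{w | (cube n).Adj v w ∧ w ∉ F} ≤ 2) :
    2 * n ≤ #F + 6 := by
  set A := (cube n).neighborFinset u ∩ F
  set B := (cube n).neighborFinset v ∩ F
  have hA : #A + _ = n := card_neighborFinset_inter_add_card_filter F u
  have hB : #B + _ = n := card_neighborFinset_inter_add_card_filter F v
  have hAB : #(A ∩ B) ≤ 2 :=
    (card_le_card (by intro w; simp +contextual [A, B])).trans
      (card_neighborFinset_inter_le_two huv)
  have hF : #(A ∪ B) ≤ #F := card_le_card (union_subset inter_subset_right inter_subset_right)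
  have := card_union_add_card_inter A B
  omega

end cube

lemma exists_forall_two_le_card_erase {α ι : Type*} [Fintype ι] [DecidableEq ι]
    (hι : 3 ≤ Fintype.card ι) (p : α → Prop) (D : α → Finset ι)
    (hD : ∀ a, p a → 2 ≤ #(D a))
    (hD_tight : ∀ a, p a → ∀ b, p b → #(D a) ≤ 2 → #(D b) ≤ 2 → a = b) :
    ∃ j, ∀ a, p a → 2 ≤ #((D a).erase j) := by
  have hloose (j : ι) (a : α) (ha : 3 ≤ #(D a)) : 2 ≤ #((D a).erase j) :=
    le_trans (by omega) pred_card_le_card_erase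
  by_cases htight : ∃ a, p a ∧ #(D a) ≤ 2
  · obtain ⟨a, ha, haD⟩ := htight
    obtain ⟨j, -, hj⟩ := exists_mem_notMem_of_card_lt_card (s := D a) (t := univ)
      (by rw [card_univ]; omega)
    refine ⟨j, fun b hb => ?_⟩
    by_cases hba : b = a
    · rw [hba, erase_eq_of_notMem hj]; exact hD a ha
    · exact hloose j b (by by_contra! h; exact hba (hD_tight b hb a ha (by omega) haD))
  · push Not at htight
    have : Nonempty ι := Fintype.card_pos_iff.mp (by omega)
    exact ⟨Classical.arbitrary ι, fun a ha => hloose _ a (htight a ha)⟩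

/-- If |F| ≤ 2n − 7 and each fault-free vertex of Q_n (n ≥ 5) has at least two
fault-free neighbors, then there is a coordinate j such that each fault-free
vertex has at least two fault-free neighbors within its own subcube L_j or R_j. -/
theorem cube_good_splitting_coordinate (n : ℕ) (hn : 5 ≤ n)
    (F : Finset (Fin n → Bool)) (hF : F.card ≤ 2 * n - 7)
    (hdeg : ∀ v ∉ F, 2 ≤ (Finset.univ.filter fun w => (cube n).Adj v w ∧ w ∉ F).card) :
    ∃ j : Fin n, ∀ v ∉ F,
      2 ≤ (Finset.univ.filter fun w => (cube n).Adj v w ∧ w ∉ F ∧ w j = v j).card := by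
  have htight : ∀ u ∉ F, ∀ v ∉ F, #{w | (cube n).Adj u w ∧ w ∉ F} ≤ 2 →
      #{w | (cube n).Adj v w ∧ w ∉ F} ≤ 2 → u = v := by
    intro u _ v _ hu hv
    by_contra huv
    have := cube.two_mul_le_card_add_six_of_ne huv hu hv
    omega
  simp only [cube.card_filter_adj_and, cube.flipCoord_apply_eq_iff] at hdeg htight ⊢
  obtain ⟨j, hj⟩ := exists_forall_two_le_card_erase (by rw [Fintype.card_fin]; omega) (· ∉ F)
    (fun v => {i | cube.flipCoord v i ∉ F}) hdeg htight
  refine ⟨j, fun v hv => (hj v hv).trans_eq (congrArg card ?_)⟩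
  ext i
  simp [and_comm, eq_comm]
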